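/- arXiv:1702.05758 — 3 statements merged into one kernel-verified Lean document; each statement's English description precedes it below -/
import Mathlib

section
/- With a_n as defined by the Painlevé III recurrence with parameters α = -1/32, β = -1/4, δ = -1/32 (a_0 = -1, a_1 = 4, a_2 = 0, a_3 = 64/3, a_4 = 256/3, a_5 = 2048, and a_n = -(1/3)∑_{k=1}^{n-1} a_k ∑_{j=0}^{n-k} a_j a_{n-k-j} + (1/3)∑_{k=1}^{n-1} a_k a_{n-k} - 4a_{n-1} - (32/3)∑_{k=1}^{n-2}(2k²+k(2-n)) a_k a_{n-2-k} for n ≥ 6), one has a_n ≥ (32/3)(n-3)(n-2)·a_{n-2} for all n ≥ 5. -/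
/-!
Since `a₀ = -1`, `a₁ = 4` and `a₂ = 0`, the recurrence can be rewritten (`recurrenceRHS_eq`) as
`a_n = (32/3)(n-2)² a_{n-2} + 4 a_{n-1} - (128/3)(n-4)² a_{n-3} + G_n - T_n / 3 - (16/3) V_{n-2}`
with `G_n = ∑_{k=3}^{n-3} a_k a_{n-k}` (`midConvSum`), a triple convolution `T_n ≥ 0`
(`tripleConvSum`) and `V_m = ∑_{k=3}^{m-3} (2k-m)² a_k a_{m-k} ≥ 0` (`centeredMoment`).
The leading term carries the claimed growth, and `4 a_{n-1}` beats the `a_{n-3}` term by the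
lower bound at `n - 1`, so it remains to see that `T_n` and `V_{n-2}` are `O(a_{n-2})`.
This is a strong induction on `n` carrying positivity, the two-sided bound
`(n-3)(n-2) ≤ (3/32) a_n / a_{n-2} ≤ (n-2)(n-1)`, the ratio `a_n ≥ 12 a_{n-1}`, and
`Φ_n ≤ 1000 a_{n-3}`, `V_n ≤ 120 n² a_{n-3}` for `Φ_n = ∑_{k=3}^{⌊n/2⌋} k² a_k a_{n-k}`
(`halfMoment`). Both moment bounds pass from `n - 2` to `n` by comparing `a_k` with
`(32/3)(k-2)(k-1) a_{k-2}` term by term, `Φ_n` bounds `G_n`, and `G` bounds the inner sums of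
`T_n`. The terms up to `a₁₁` are computed exactly and serve as the base of the induction.
-/

open Finset

namespace PainleveIII

section Sums

variable {M : Type*} [AddCommMonoid M]

theorem sum_Icc_one_eq_sum_range (f : ℕ → M) (m : ℕ) :
    ∑ k ∈ Icc 1 m, f k = ∑ i ∈ range m, f (i + 1) := by
  rw [← Ico_add_one_right_eq_Icc, sum_Ico_eq_sum_range]
  simp only [add_tsub_cancel_right, add_comm 1]

theorem sum_range_add_two (g : ℕ → M) (L : ℕ) :
    ∑ i ∈ range (L + 2), g i = g 0 + ∑ i ∈ range L, g (i + 1) + g (L + 1) := by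
  rw [sum_range_succ, sum_range_succ', add_comm _ (g 0)]

theorem sum_range_add_four (g : ℕ → M) (L : ℕ) :
    ∑ i ∈ range (L + 4), g i
      = g 0 + g 1 + ∑ i ∈ range L, g (i + 2) + g (L + 2) + g (L + 3) := by
  rw [sum_range_add_two, sum_range_add_two]
  simp only [add_assoc]

end Sums

theorem sum_range_le_two_mul_sum_of_symm (f : ℕ → ℝ) {L c : ℕ} (hc : c ≤ L) (hLc : L - c ≤ c)
    (hsymm : ∀ i < L, f (L - 1 - i) = f i) (hnonneg : ∀ i < c, 0 ≤ f i) :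
    ∑ i ∈ range L, f i ≤ 2 * ∑ i ∈ range c, f i := by
  have hsplit : ∑ i ∈ range L, f i = ∑ i ∈ range c, f i + ∑ i ∈ range (L - c), f (c + i) := by
    rw [← sum_range_add_sum_Ico f hc, sum_Ico_eq_sum_range]
  have hreflect : ∑ i ∈ range (L - c), f (c + i) = ∑ i ∈ range (L - c), f i := by
    rw [← sum_range_reflect (fun i => f (c + i)) (L - c)]
    refine sum_congr rfl fun i hi => ?_
    rw [mem_range] at hi
    rw [show c + (L - c - 1 - i) = L - 1 - i by omega, hsymm i (by omega)]
  have hsub : ∑ i ∈ range (L - c), f i ≤ ∑ i ∈ range c, f i :=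
    sum_le_sum_of_subset_of_nonneg (range_subset_range.mpr hLc)
      fun i hi _ => hnonneg i (mem_range.mp hi)
  linarith

/- With `k = i + 1`, resp. `k = i + 3`, the sums below are `∑_{k=1}^{m-1} a_k a_{m-k}`,
`∑_{k=3}^{m-3} a_k a_{m-k}`, `∑_{k=3}^{⌊m/2⌋} k² a_k a_{m-k}`, `∑_{k=3}^{m-3} (2k-m)² a_k a_{m-k}`
and `∑_{k=1}^{n-2} a_k ∑_{l=1}^{n-k-1} a_l a_{n-k-l}`. -/
noncomputable def convSum (a : ℕ → ℝ) (m : ℕ) : ℝ :=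
  ∑ i ∈ range (m - 1), a (i + 1) * a (m - 1 - i)

noncomputable def midConvSum (a : ℕ → ℝ) (m : ℕ) : ℝ :=
  ∑ i ∈ range (m - 5), a (i + 3) * a (m - 3 - i)

noncomputable def halfMoment (a : ℕ → ℝ) (m : ℕ) : ℝ :=
  ∑ i ∈ range (m / 2 - 2), ((i : ℝ) + 3) ^ 2 * a (i + 3) * a (m - 3 - i)

noncomputable def centeredMoment (a : ℕ → ℝ) (m : ℕ) : ℝ :=
  ∑ i ∈ range (m - 5), (2 * ((i : ℝ) + 3) - m) ^ 2 * a (i + 3) * a (m - 3 - i)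

noncomputable def tripleConvSum (a : ℕ → ℝ) (n : ℕ) : ℝ :=
  ∑ i ∈ range (n - 2), a (i + 1) * convSum a (n - 1 - i)

noncomputable def recurrenceRHS (a : ℕ → ℝ) (n : ℕ) : ℝ :=
  -(1 / 3) * ∑ k ∈ Icc 1 (n - 1), a k * ∑ j ∈ range (n - k + 1), a j * a (n - k - j)
    + (1 / 3) * ∑ k ∈ Icc 1 (n - 1), a k * a (n - k)
    - 4 * a (n - 1)
    - (32 / 3) * ∑ k ∈ Icc 1 (n - 2),
      (2 * (k : ℝ) ^ 2 + (k : ℝ) * (2 - (n : ℝ))) * a k * a (n - 2 - k)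

section Identities

variable {a : ℕ → ℝ}

theorem sum_range_succ_mul_eq_convSum (h0 : a 0 = -1) {m : ℕ} (hm : 1 ≤ m) :
    ∑ j ∈ range (m + 1), a j * a (m - j) = -2 * a m + convSum a m := by
  obtain ⟨q, rfl⟩ : ∃ q, m = q + 1 := ⟨m - 1, by omega⟩
  rw [sum_range_succ, sum_range_succ', convSum, Nat.add_sub_cancel]
  simp only [Nat.add_sub_add_right, Nat.sub_self, Nat.sub_zero, h0]
  ring

theorem sum_Icc_mul_eq_convSum (m : ℕ) :
    ∑ k ∈ Icc 1 (m - 1), a k * a (m - k) = convSum a m := by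
  rw [sum_Icc_one_eq_sum_range, convSum]
  exact sum_congr rfl fun i _ => by rw [Nat.sub_sub, add_comm 1]

theorem convSum_eq (h1 : a 1 = 4) (h2 : a 2 = 0) {m : ℕ} (hm : 5 ≤ m) :
    convSum a m = 8 * a (m - 1) + midConvSum a m := by
  obtain ⟨q, rfl⟩ : ∃ q, m = q + 5 := ⟨m - 5, by omega⟩
  rw [convSum, show q + 5 - 1 = q + 4 from rfl, sum_range_add_four]
  have hmid : ∑ i ∈ range q, a (i + 2 + 1) * a (q + 4 - (i + 2)) = midConvSum a (q + 5) := by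
    rw [midConvSum, show q + 5 - 5 = q from rfl]
    exact sum_congr rfl fun i _ => by rw [show q + 4 - (i + 2) = q + 5 - 3 - i by omega]
  rw [hmid, show q + 4 - 1 = q + 3 by omega, show q + 4 - (q + 2) = 2 by omega,
    show q + 4 - (q + 3) = 1 by omega]
  simp only [Nat.sub_zero, h1, h2]
  ring

theorem sum_Icc_mul_sum_eq (h0 : a 0 = -1) (n : ℕ) :
    ∑ k ∈ Icc 1 (n - 1), a k * ∑ j ∈ range (n - k + 1), a j * a (n - k - j)
      = -2 * convSum a n + ∑ k ∈ Icc 1 (n - 1), a k * convSum a (n - k) := by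
  rw [← sum_Icc_mul_eq_convSum, mul_sum, ← sum_add_distrib]
  refine sum_congr rfl fun k hk => ?_
  rw [mem_Icc] at hk
  rw [sum_range_succ_mul_eq_convSum h0 (by omega)]
  ring

theorem sum_Icc_mul_convSum_eq_tripleConvSum {n : ℕ} (hn : 2 ≤ n) :
    ∑ k ∈ Icc 1 (n - 1), a k * convSum a (n - k) = tripleConvSum a n := by
  obtain ⟨q, rfl⟩ : ∃ q, n = q + 2 := ⟨n - 2, by omega⟩
  have htop : convSum a (q + 2 - (q + 1)) = 0 := by
    rw [show q + 2 - (q + 1) = 1 by omega, convSum, Nat.sub_self, sum_range_zero]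
  rw [sum_Icc_one_eq_sum_range, show q + 2 - 1 = q + 1 from rfl, sum_range_succ, htop,
    mul_zero, add_zero, tripleConvSum, Nat.add_sub_cancel]
  exact sum_congr rfl fun i _ => by rw [Nat.sub_sub, add_comm 1]

/-- The weight `k (2k - m)` at `m = n - 2` symmetrizes to `(2k - m)² / 2` under `k ↦ m - k`. -/
theorem sum_Icc_weight_eq (h0 : a 0 = -1) (h1 : a 1 = 4) (h2 : a 2 = 0) {n : ℕ} (hn : 7 ≤ n) :
    ∑ k ∈ Icc 1 (n - 2), (2 * (k : ℝ) ^ 2 + (k : ℝ) * (2 - (n : ℝ))) * a k * a (n - 2 - k)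
      = -((n : ℝ) - 2) ^ 2 * a (n - 2) + 4 * ((n : ℝ) - 4) ^ 2 * a (n - 3)
        + centeredMoment a (n - 2) / 2 := by
  obtain ⟨q, rfl⟩ : ∃ q, n = q + 7 := ⟨n - 7, by omega⟩
  set g : ℕ → ℝ := fun i => ((i : ℝ) + 1) * (2 * ((i : ℝ) + 1) - ((q : ℝ) + 5))
    * a (i + 1) * a (q + 4 - i) with hg
  have hterm : ∀ i ∈ range (q + 7 - 2), (2 * ((i + 1 : ℕ) : ℝ) ^ 2
      + ((i + 1 : ℕ) : ℝ) * (2 - ((q + 7 : ℕ) : ℝ))) * a (i + 1) * a (q + 7 - 2 - (i + 1))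
      = g i := fun i _ => by
    rw [hg, show q + 7 - 2 - (i + 1) = q + 4 - i by omega]
    push_cast
    ring
  have hmid : 2 * ∑ i ∈ range q, g (i + 2) = centeredMoment a (q + 5) := by
    rw [two_mul]
    nth_rewrite 2 [← sum_range_reflect]
    rw [← sum_add_distrib, centeredMoment, show q + 5 - 5 = q from rfl]
    refine sum_congr rfl fun i hi => ?_
    rw [mem_range] at hi
    have hcast : ((q - 1 - i + 2 : ℕ) : ℝ) = (q : ℝ) + 1 - i := by
      rw [show q - 1 - i + 2 = q + 1 - i by omega, Nat.cast_sub (by omega)]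
      push_cast
      ring
    simp only [hg, hcast]
    rw [show q - 1 - i + 2 + 1 = q + 5 - 3 - i by omega,
      show q + 4 - (q - 1 - i + 2) = i + 3 by omega, show q + 4 - (i + 2) = q + 5 - 3 - i by omega]
    push_cast
    ring
  rw [sum_Icc_one_eq_sum_range, sum_congr rfl hterm, show q + 7 - 2 = q + 5 from rfl,
    sum_range_succ, sum_range_add_four, ← hmid]
  simp only [hg, show q + 4 - (q + 2) = 2 by omega, show q + 4 - (q + 3) = 1 by omega,
    Nat.sub_self, show q + 4 - 1 = q + 3 by omega, h0, h1, h2]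
  push_cast
  ring

theorem recurrenceRHS_eq (h0 : a 0 = -1) (h1 : a 1 = 4) (h2 : a 2 = 0) {n : ℕ} (hn : 7 ≤ n) :
    recurrenceRHS a n = 32 / 3 * ((n : ℝ) - 2) ^ 2 * a (n - 2) + 4 * a (n - 1)
      - 128 / 3 * ((n : ℝ) - 4) ^ 2 * a (n - 3) + midConvSum a n - tripleConvSum a n / 3
      - 16 / 3 * centeredMoment a (n - 2) := by
  rw [recurrenceRHS, sum_Icc_mul_sum_eq h0, sum_Icc_mul_convSum_eq_tripleConvSum (by omega),
    sum_Icc_mul_eq_convSum, convSum_eq h1 h2 (by omega), sum_Icc_weight_eq h0 h1 h2 hn]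
  ring

end Identities

section Bounds

variable {a : ℕ → ℝ}

theorem convSum_nonneg {m : ℕ} (hnonneg : ∀ k, 1 ≤ k → k ≤ m - 1 → 0 ≤ a k) :
    0 ≤ convSum a m :=
  sum_nonneg fun i hi => by
    rw [mem_range] at hi
    exact mul_nonneg (hnonneg _ (by omega) (by omega)) (hnonneg _ (by omega) (by omega))

theorem midConvSum_nonneg {m : ℕ} (hnonneg : ∀ k, 3 ≤ k → k ≤ m - 3 → 0 ≤ a k) :
    0 ≤ midConvSum a m :=
  sum_nonneg fun i hi => by
    rw [mem_range] at hi
    exact mul_nonneg (hnonneg _ (by omega) (by omega)) (hnonneg _ (by omega) (by omega))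

theorem centeredMoment_nonneg {m : ℕ} (hnonneg : ∀ k, 3 ≤ k → k ≤ m - 3 → 0 ≤ a k) :
    0 ≤ centeredMoment a m :=
  sum_nonneg fun i hi => by
    rw [mem_range] at hi
    have := hnonneg (i + 3) (by omega) (by omega)
    have := hnonneg (m - 3 - i) (by omega) (by omega)
    positivity

theorem tripleConvSum_nonneg {n : ℕ} (hnonneg : ∀ k, 1 ≤ k → k ≤ n - 2 → 0 ≤ a k) :
    0 ≤ tripleConvSum a n :=
  sum_nonneg fun i hi => by
    rw [mem_range] at hi
    exact mul_nonneg (hnonneg _ (by omega) (by omega))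
      (convSum_nonneg fun k hk₁ hk₂ => hnonneg k hk₁ (by omega))

/-- Away from the two end terms `k = 3, m - 3`, the summands of `midConvSum` carry weight
`k² ≥ 16` in `halfMoment`, and by symmetry only the half `k ≤ m / 2` has to be counted. -/
theorem midConvSum_le (h3 : a 3 = 64 / 3) {m : ℕ} (hm : 8 ≤ m)
    (hpos : ∀ k, 3 ≤ k → k ≤ m - 3 → 0 < a k) (hhalf : halfMoment a m ≤ 1000 * a (m - 3)) :
    midConvSum a m ≤ 503 / 3 * a (m - 3) := by
  obtain ⟨q, rfl⟩ : ∃ q, m = q + 8 := ⟨m - 8, by omega⟩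
  set K := (q + 8) / 2
  set f : ℕ → ℝ := fun i => a (i + 4) * a (q + 4 - i) with hf
  have hf_nonneg : ∀ i ≤ q, 0 ≤ f i := fun i hi =>
    mul_nonneg (hpos _ (by omega) (by omega)).le (hpos _ (by omega) (by omega)).le
  have hmid : midConvSum a (q + 8) = 2 * a 3 * a (q + 5) + ∑ i ∈ range (q + 1), f i := by
    rw [midConvSum, show q + 8 - 5 = q + 1 + 2 from rfl, sum_range_add_two]
    simp only [hf, show q + 8 - 3 - (q + 1 + 1) = 3 by omega,
      show q + 8 - 3 - 0 = q + 5 by omega, show ∀ i, q + 8 - 3 - (i + 1) = q + 4 - i by omega]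
    ring
  have hhalf_eq : halfMoment a (q + 8)
      = 9 * a 3 * a (q + 5) + ∑ i ∈ range (K - 3), ((i : ℝ) + 4) ^ 2 * f i := by
    rw [halfMoment, show (q + 8) / 2 - 2 = K - 3 + 1 by omega, sum_range_succ']
    simp only [hf, show ∀ i, q + 8 - 3 - (i + 1) = q + 4 - i by omega]
    push_cast
    ring_nf
  have hsymm : ∑ i ∈ range (q + 1), f i ≤ 2 * ∑ i ∈ range (K - 3), f i := by
    refine sum_range_le_two_mul_sum_of_symm f (by omega) (by omega) (fun i hi => ?_)
      fun i hi => hf_nonneg i (by omega)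
    simp only [hf, show q + 1 - 1 - i + 4 = q + 4 - i by omega,
      show q + 4 - (q + 1 - 1 - i) = i + 4 by omega, mul_comm]
  have hweight :
      16 * ∑ i ∈ range (K - 3), f i ≤ ∑ i ∈ range (K - 3), ((i : ℝ) + 4) ^ 2 * f i := by
    rw [mul_sum]
    refine sum_le_sum fun i hi => mul_le_mul_of_nonneg_right ?_ (hf_nonneg i ?_)
    · nlinarith [(Nat.cast_nonneg i : (0 : ℝ) ≤ i)]
    · rw [mem_range] at hi
      omega
  have h3pos := hpos (q + 5) (by omega) (by omega)
  rw [show q + 8 - 3 = q + 5 from rfl, hhalf_eq, h3] at hhalf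
  rw [show q + 8 - 3 = q + 5 from rfl, hmid, h3]
  linarith

theorem convSum_le_of_ratio (h1 : a 1 = 4) (h2 : a 2 = 0) {m : ℕ} (hm : 5 ≤ m)
    (hmid : midConvSum a m ≤ 503 / 3 * a (m - 3)) (hpos : 0 < a (m - 3))
    (hratio₁ : 12 * a (m - 3) ≤ a (m - 2)) (hratio₂ : 12 * a (m - 2) ≤ a (m - 1)) :
    convSum a m ≤ 46 / 5 * a (m - 1) := by
  rw [convSum_eq h1 h2 hm]
  linarith

theorem tripleConvSum_le {n : ℕ} (hn : 3 ≤ n) {c : ℝ} (hc : 0 ≤ c)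
    (hconv : ∀ m, 2 ≤ m → m ≤ n - 1 → convSum a m ≤ c * a (m - 1))
    (hnonneg : ∀ k, 1 ≤ k → k ≤ n - 2 → 0 ≤ a k) :
    tripleConvSum a n ≤ c ^ 2 * a (n - 2) :=
  calc tripleConvSum a n
      ≤ ∑ i ∈ range (n - 2), a (i + 1) * (c * a (n - 2 - i)) := by
        refine sum_le_sum fun i hi => ?_
        rw [mem_range] at hi
        have := hconv (n - 1 - i) (by omega) (by omega)
        rw [show n - 1 - i - 1 = n - 2 - i by omega] at this
        exact mul_le_mul_of_nonneg_left this (hnonneg _ (by omega) (by omega))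
    _ = c * convSum a (n - 1) := by
        rw [convSum, mul_sum, show n - 1 - 1 = n - 2 by omega]
        exact sum_congr rfl fun i _ => by rw [show n - 2 - i = n - 1 - 1 - i by omega]; ring
    _ ≤ c * (c * a (n - 2)) := by
        have := hconv (n - 1) (by omega) le_rfl
        rw [show n - 1 - 1 = n - 2 by omega] at this
        exact mul_le_mul_of_nonneg_left this hc
    _ = c ^ 2 * a (n - 2) := by ring

end Bounds

section HalfMoment

variable {a : ℕ → ℝ}

theorem halfMoment_coeff_le {x K : ℝ} (hx : 0 ≤ x) (hK : 7 ≤ K) (hxK : x ≤ K - 5) :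
    (K - 2) * ((x + 5) ^ 2 * (x + 4) * (x + 3)) ≤ K ^ 2 * (K - 1) * (x + 3) ^ 2 := by
  have hx3 : 0 ≤ x + 3 := by linarith
  have hKx : 0 ≤ K - 5 - x := by linarith
  nlinarith [mul_nonneg (mul_nonneg (mul_nonneg hx3 hKx) (by nlinarith : 0 ≤ (K - 2) * x))
      (by linarith : 0 ≤ K + 9 + x),
    mul_nonneg (mul_nonneg hx3 hKx) (by nlinarith : 0 ≤ 3 * K ^ 2 + 12 * K - 40)]

theorem halfMoment_tail_le {n K : ℕ} (hK : 7 ≤ K) (hKn : 2 * K ≤ n)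
    (hupper : ∀ u, 5 ≤ u → u ≤ K → a u ≤ 32 / 3 * ((u : ℝ) - 2) * ((u : ℝ) - 1) * a (u - 2))
    (hpos : ∀ k, 3 ≤ k → k ≤ n - 3 → 0 < a k) :
    ((K : ℝ) - 2) * ∑ i ∈ range (K - 4), ((i : ℝ) + 5) ^ 2 * a (i + 5) * a (n - 5 - i)
      ≤ 32 / 3 * (K : ℝ) ^ 2 * ((K : ℝ) - 1) * halfMoment a (n - 2) := by
  have hKr : (7 : ℝ) ≤ K := by exact_mod_cast hK
  have hterm : ∀ i ∈ range (K - 4),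
      ((K : ℝ) - 2) * (((i : ℝ) + 5) ^ 2 * a (i + 5) * a (n - 5 - i))
        ≤ 32 / 3 * (K : ℝ) ^ 2 * ((K : ℝ) - 1)
          * (((i : ℝ) + 3) ^ 2 * a (i + 3) * a (n - 5 - i)) := by
    intro i hi
    rw [mem_range] at hi
    have hy := hpos (i + 3) (by omega) (by omega)
    have hz := hpos (n - 5 - i) (by omega) (by omega)
    have hu := hupper (i + 5) (by omega) (by omega)
    rw [show i + 5 - 2 = i + 3 by omega] at hu
    push_cast at hu
    have hcoeff := halfMoment_coeff_le (Nat.cast_nonneg i) hKr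
      (by rw [le_sub_iff_add_le]; exact_mod_cast (by omega : i + 5 ≤ K))
    have e1 := mul_le_mul_of_nonneg_left hu
      (mul_nonneg (mul_nonneg (by linarith) (sq_nonneg _)) hz.le :
        (0 : ℝ) ≤ ((K : ℝ) - 2) * ((i : ℝ) + 5) ^ 2 * a (n - 5 - i))
    have e2 := mul_le_mul_of_nonneg_right hcoeff
      (by positivity : (0 : ℝ) ≤ 32 / 3 * a (i + 3) * a (n - 5 - i))
    linarith
  have hsub : ∑ i ∈ range (K - 4), ((i : ℝ) + 3) ^ 2 * a (i + 3) * a (n - 5 - i)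
      ≤ halfMoment a (n - 2) := by
    rw [halfMoment, show n - 2 - 3 = n - 5 by omega]
    refine sum_le_sum_of_subset_of_nonneg (range_subset_range.mpr (by omega)) fun i hi _ => ?_
    rw [mem_range] at hi
    have := hpos (i + 3) (by omega) (by omega)
    have := hpos (n - 5 - i) (by omega) (by omega)
    positivity
  rw [mul_sum]
  refine (sum_le_sum hterm).trans ?_
  rw [← mul_sum]
  exact mul_le_mul_of_nonneg_left hsub (by nlinarith)

/-- `6248 / 9 = 1000 - 9 a₃ - 16 a₄ / 12` is what is left for the tail of `halfMoment a n`. -/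
theorem halfMoment_poly_le {n K : ℕ} (hn : 15 ≤ n) (hK : n / 2 = K) :
    9000 * (K : ℝ) ^ 2 * ((K : ℝ) - 1)
      ≤ 6248 * ((K : ℝ) - 2) * ((n : ℝ) - 6) * ((n : ℝ) - 5) := by
  obtain rfl | rfl : n = 2 * K ∨ n = 2 * K + 1 := by omega
  · have ht : (0 : ℝ) ≤ (K : ℝ) - 8 := by
      rw [sub_nonneg]; exact_mod_cast (by omega : 8 ≤ K)
    push_cast
    nlinarith [mul_nonneg (mul_nonneg ht ht) ht, mul_nonneg ht ht, ht]
  · have ht : (0 : ℝ) ≤ (K : ℝ) - 7 := by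
      rw [sub_nonneg]; exact_mod_cast (by omega : 7 ≤ K)
    push_cast
    nlinarith [mul_nonneg (mul_nonneg ht ht) ht, mul_nonneg ht ht, ht]

theorem halfMoment_eq (n : ℕ) {K : ℕ} (hK : n / 2 = K) (hK4 : 4 ≤ K) :
    halfMoment a n = 9 * a 3 * a (n - 3) + 16 * a 4 * a (n - 4)
      + ∑ i ∈ range (K - 4), ((i : ℝ) + 5) ^ 2 * a (i + 5) * a (n - 5 - i) := by
  rw [halfMoment, hK, show K - 2 = K - 4 + 2 by omega, sum_range_succ', sum_range_succ']
  simp only [show ∀ i, n - 3 - (i + 1 + 1) = n - 5 - i by omega, Nat.sub_zero,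
    show n - 3 - (0 + 1) = n - 4 by omega]
  push_cast
  ring_nf

theorem halfMoment_le_of_prev (h3 : a 3 = 64 / 3) (h4 : a 4 = 256 / 3) {n : ℕ} (hn : 15 ≤ n)
    (hupper : ∀ u, 5 ≤ u → u ≤ n / 2 →
      a u ≤ 32 / 3 * ((u : ℝ) - 2) * ((u : ℝ) - 1) * a (u - 2))
    (hpos : ∀ k, 3 ≤ k → k ≤ n - 3 → 0 < a k)
    (hprev : halfMoment a (n - 2) ≤ 1000 * a (n - 5))
    (hlower : 32 / 3 * ((n : ℝ) - 6) * ((n : ℝ) - 5) * a (n - 5) ≤ a (n - 3))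
    (hratio : 12 * a (n - 4) ≤ a (n - 3)) :
    halfMoment a n ≤ 1000 * a (n - 3) := by
  set K := n / 2 with hK
  have hKr : (7 : ℝ) ≤ K := by exact_mod_cast (by omega : 7 ≤ K)
  have htail := halfMoment_tail_le (by omega) (by omega) hupper hpos
  have hpoly := halfMoment_poly_le hn hK.symm
  have h5 := (hpos (n - 5) (by omega) (by omega)).le
  have htail' :
      ((K : ℝ) - 2) * ∑ i ∈ range (K - 4), ((i : ℝ) + 5) ^ 2 * a (i + 5) * a (n - 5 - i)
        ≤ ((K : ℝ) - 2) * (6248 / 9 * a (n - 3)) := by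
    refine htail.trans ?_
    nlinarith [mul_le_mul_of_nonneg_left hprev
        (by nlinarith : (0 : ℝ) ≤ (K : ℝ) ^ 2 * ((K : ℝ) - 1)),
      mul_le_mul_of_nonneg_right hpoly h5, mul_le_mul_of_nonneg_left hlower
        (by linarith : (0 : ℝ) ≤ (K : ℝ) - 2)]
  have := le_of_mul_le_mul_left htail' (by linarith)
  rw [halfMoment_eq n hK.symm (by omega), h3, h4]
  linarith

end HalfMoment

section CenteredMoment

variable {a : ℕ → ℝ}

theorem centeredMoment_eq {n : ℕ} (hn : 9 ≤ n) :
    centeredMoment a n = 2 * ((n : ℝ) - 6) ^ 2 * a 3 * a (n - 3)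
      + 2 * ((n : ℝ) - 8) ^ 2 * a 4 * a (n - 4)
      + ∑ i ∈ range (n - 9), (2 * ((i : ℝ) + 5) - n) ^ 2 * a (i + 5) * a (n - 5 - i) := by
  have hcast : ∀ j, ((n - 9 + j : ℕ) : ℝ) = (n : ℝ) - 9 + j := fun j => by
    rw [Nat.cast_add, Nat.cast_sub hn]; rfl
  rw [centeredMoment]
  conv_lhs => rw [show n - 5 = n - 9 + 4 by omega, sum_range_add_four]
  simp only [hcast, show ∀ i, n - 3 - (i + 2) = n - 5 - i by omega,
    show n - 5 - (n - 9) = 4 by omega, show n - 5 - (n - 9 + 1) = 3 by omega,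
    show n - 9 + 2 + 3 = n - 4 by omega, show n - 9 + 3 + 3 = n - 3 by omega,
    Nat.sub_zero, show n - 3 - 1 = n - 4 by omega]
  push_cast
  ring_nf

theorem centeredMoment_half_le {n K : ℕ} (hK : 7 ≤ K) (hKn : 2 * K ≤ n)
    (hupper : ∀ u, 5 ≤ u → u ≤ K → a u ≤ 32 / 3 * ((u : ℝ) - 2) * ((u : ℝ) - 1) * a (u - 2))
    (hpos : ∀ k, 3 ≤ k → k ≤ n - 3 → 0 < a k) :
    ∑ i ∈ range (K - 4), (2 * ((i : ℝ) + 5) - n) ^ 2 * a (i + 5) * a (n - 5 - i)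
      ≤ 32 / 3 * ((K : ℝ) - 2) * ((K : ℝ) - 1) * centeredMoment a (n - 2) := by
  have hterm : ∀ i ∈ range (K - 4), (2 * ((i : ℝ) + 5) - n) ^ 2 * a (i + 5) * a (n - 5 - i)
      ≤ 32 / 3 * ((K : ℝ) - 2) * ((K : ℝ) - 1)
        * ((2 * ((i : ℝ) + 3) - ((n - 2 : ℕ) : ℝ)) ^ 2 * a (i + 3) * a (n - 5 - i)) := by
    intro i hi
    rw [mem_range] at hi
    have hy := hpos (i + 3) (by omega) (by omega)
    have h5 := hpos (i + 5) (by omega) (by omega)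
    have hz := hpos (n - 5 - i) (by omega) (by omega)
    have hu := hupper (i + 5) (by omega) (by omega)
    rw [show i + 5 - 2 = i + 3 by omega] at hu
    push_cast at hu
    have hiK : (i : ℝ) + 5 ≤ K := by exact_mod_cast (by omega : i + 5 ≤ K)
    have h2K : 2 * ((i : ℝ) + 5) ≤ n := by exact_mod_cast (by omega : 2 * (i + 5) ≤ n)
    rw [Nat.cast_sub (by omega : 2 ≤ n), Nat.cast_ofNat]
    have e1 : (2 * ((i : ℝ) + 5) - n) ^ 2 ≤ (2 * ((i : ℝ) + 3) - (n - 2)) ^ 2 := by nlinarith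
    have e3 : ((i : ℝ) + 3) * ((i : ℝ) + 4) ≤ ((K : ℝ) - 2) * ((K : ℝ) - 1) := by nlinarith
    have hw : (0 : ℝ) ≤ (2 * ((i : ℝ) + 3) - (n - 2)) ^ 2 := sq_nonneg _
    nlinarith [mul_le_mul_of_nonneg_right e1 (mul_pos h5 hz).le,
      mul_le_mul_of_nonneg_right (mul_le_mul_of_nonneg_left hu hw) hz.le,
      mul_le_mul_of_nonneg_right e3 (by positivity :
        (0 : ℝ) ≤ 32 / 3 * ((2 * ((i : ℝ) + 3) - (n - 2)) ^ 2 * (a (i + 3) * a (n - 5 - i))))]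
  have hsub : ∑ i ∈ range (K - 4),
      (2 * ((i : ℝ) + 3) - ((n - 2 : ℕ) : ℝ)) ^ 2 * a (i + 3) * a (n - 5 - i)
        ≤ centeredMoment a (n - 2) := by
    rw [centeredMoment, show n - 2 - 3 = n - 5 by omega]
    refine sum_le_sum_of_subset_of_nonneg (range_subset_range.mpr (by omega)) fun i hi _ => ?_
    rw [mem_range] at hi
    have := hpos (i + 3) (by omega) (by omega)
    have := hpos (n - 5 - i) (by omega) (by omega)
    positivity
  refine (sum_le_sum hterm).trans ?_
  rw [← mul_sum]
  have hKr : (7 : ℝ) ≤ K := by exact_mod_cast hK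
  exact mul_le_mul_of_nonneg_left hsub (by nlinarith)

theorem centeredMoment_tail_le {n K : ℕ} (hK : 7 ≤ K) (hKn : n / 2 = K)
    (hupper : ∀ u, 5 ≤ u → u ≤ K → a u ≤ 32 / 3 * ((u : ℝ) - 2) * ((u : ℝ) - 1) * a (u - 2))
    (hpos : ∀ k, 3 ≤ k → k ≤ n - 3 → 0 < a k) :
    ∑ i ∈ range (n - 9), (2 * ((i : ℝ) + 5) - n) ^ 2 * a (i + 5) * a (n - 5 - i)
      ≤ 2 * (32 / 3 * ((K : ℝ) - 2) * ((K : ℝ) - 1) * centeredMoment a (n - 2)) := by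
  refine (sum_range_le_two_mul_sum_of_symm _ (by omega) (by omega) (fun i hi => ?_)
    fun i hi => ?_).trans
    (mul_le_mul_of_nonneg_left (centeredMoment_half_le hK (by omega) hupper hpos) two_pos.le)
  · have hcast : ((n - 9 - 1 - i : ℕ) : ℝ) = (n : ℝ) - 10 - i := by
      rw [show n - 9 - 1 - i = n - (10 + i) by omega, Nat.cast_sub (by omega)]
      push_cast
      ring
    rw [hcast, show n - 9 - 1 - i + 5 = n - 5 - i by omega,
      show n - 5 - (n - 9 - 1 - i) = i + 5 by omega]
    ring
  · have := hpos (i + 5) (by omega) (by omega)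
    have := hpos (n - 5 - i) (by omega) (by omega)
    positivity

/-- `128/3 = 2 a₃` and `128/9 = 2 a₄ / 12` are the shares of the two end pairs of
`centeredMoment a n`. -/
theorem centeredMoment_poly_le {n K : ℕ} (hn : 14 ≤ n) (hK : n / 2 = K) :
    2560 * ((K : ℝ) - 2) * ((K : ℝ) - 1) * ((n : ℝ) - 2) ^ 2
      ≤ (120 * (n : ℝ) ^ 2 - 128 / 3 * ((n : ℝ) - 6) ^ 2 - 128 / 9 * ((n : ℝ) - 8) ^ 2)
        * (32 / 3 * ((n : ℝ) - 6) * ((n : ℝ) - 5)) := by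
  have ht : (0 : ℝ) ≤ (K : ℝ) - 7 := by
    rw [sub_nonneg]; exact_mod_cast (by omega : 7 ≤ K)
  obtain rfl | rfl : n = 2 * K ∨ n = 2 * K + 1 := by omega
  all_goals
    push_cast
    nlinarith [mul_nonneg (mul_nonneg (mul_nonneg ht ht) ht) ht,
      mul_nonneg (mul_nonneg ht ht) ht, mul_nonneg ht ht, ht]

theorem centeredMoment_le_of_prev (h3 : a 3 = 64 / 3) (h4 : a 4 = 256 / 3) {n : ℕ}
    (hn : 14 ≤ n) (hupper : ∀ u, 5 ≤ u → u ≤ n / 2 →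
      a u ≤ 32 / 3 * ((u : ℝ) - 2) * ((u : ℝ) - 1) * a (u - 2))
    (hpos : ∀ k, 3 ≤ k → k ≤ n - 3 → 0 < a k)
    (hprev : centeredMoment a (n - 2) ≤ 120 * ((n : ℝ) - 2) ^ 2 * a (n - 5))
    (hlower : 32 / 3 * ((n : ℝ) - 6) * ((n : ℝ) - 5) * a (n - 5) ≤ a (n - 3))
    (hratio : 12 * a (n - 4) ≤ a (n - 3)) :
    centeredMoment a n ≤ 120 * (n : ℝ) ^ 2 * a (n - 3) := by
  set K := n / 2 with hK
  have hKr : (7 : ℝ) ≤ K := by exact_mod_cast (by omega : 7 ≤ K)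
  have hnr : (14 : ℝ) ≤ n := by exact_mod_cast hn
  have htail := centeredMoment_tail_le (by omega) hK.symm hupper hpos
  have hpoly := centeredMoment_poly_le hn hK.symm
  have h5 := hpos (n - 5) (by omega) (by omega)
  have hcoeff : (0 : ℝ) ≤ 120 * (n : ℝ) ^ 2 - 128 / 3 * ((n : ℝ) - 6) ^ 2
      - 128 / 9 * ((n : ℝ) - 8) ^ 2 := by nlinarith
  rw [centeredMoment_eq (by omega), h3, h4]
  nlinarith [mul_le_mul_of_nonneg_left hprev
      (by nlinarith : (0 : ℝ) ≤ 64 / 3 * ((K : ℝ) - 2) * ((K : ℝ) - 1)),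
    mul_le_mul_of_nonneg_left hlower hcoeff, mul_le_mul_of_nonneg_right hpoly h5.le,
    mul_le_mul_of_nonneg_left hratio
      (by positivity : (0 : ℝ) ≤ 128 / 9 * ((n : ℝ) - 8) ^ 2)]

end CenteredMoment

structure InitialValues (a : ℕ → ℝ) : Prop where
  zero : a 0 = -1
  one : a 1 = 4
  two : a 2 = 0
  three : a 3 = 64 / 3
  four : a 4 = 256 / 3
  five : a 5 = 2048
  six : a 6 = 163840 / 9
  seven : a 7 = 4997120 / 9
  eight : a 8 = 7602176
  nine : a 9 = 23735828480 / 81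
  ten : a 10 = 438371876864 / 81
  eleven : a 11 = 254577475584

theorem initialValues_of_recurrence {a : ℕ → ℝ} (h0 : a 0 = -1) (h1 : a 1 = 4) (h2 : a 2 = 0)
    (h3 : a 3 = 64 / 3) (h4 : a 4 = 256 / 3) (h5 : a 5 = 2048)
    (hrec : ∀ n, 6 ≤ n → a n = recurrenceRHS a n) : InitialValues a := by
  have value : ∀ n, 6 ≤ n → ∀ x, recurrenceRHS a n = x → a n = x :=
    fun n hn x hx => (hrec n hn).trans hx
  have h6 : a 6 = 163840 / 9 := value 6 le_rfl _ <| by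
    norm_num [recurrenceRHS, sum_Icc_one_eq_sum_range, sum_range_succ, h0, h1, h2, h3, h4, h5]
  have h7 : a 7 = 4997120 / 9 := value 7 (by norm_num) _ <| by
    norm_num [recurrenceRHS, sum_Icc_one_eq_sum_range, sum_range_succ, h0, h1, h2, h3, h4, h5,
      h6]
  have h8 : a 8 = 7602176 := value 8 (by norm_num) _ <| by
    norm_num [recurrenceRHS, sum_Icc_one_eq_sum_range, sum_range_succ, h0, h1, h2, h3, h4, h5, h6,
      h7]
  have h9 : a 9 = 23735828480 / 81 := value 9 (by norm_num) _ <| by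
    norm_num [recurrenceRHS, sum_Icc_one_eq_sum_range, sum_range_succ, h0, h1, h2, h3, h4, h5, h6,
      h7, h8]
  have h10 : a 10 = 438371876864 / 81 := value 10 (by norm_num) _ <| by
    norm_num [recurrenceRHS, sum_Icc_one_eq_sum_range, sum_range_succ, h0, h1, h2, h3, h4, h5, h6,
      h7, h8, h9]
  have h11 : a 11 = 254577475584 := value 11 (by norm_num) _ <| by
    norm_num [recurrenceRHS, sum_Icc_one_eq_sum_range, sum_range_succ, h0, h1, h2, h3, h4, h5, h6,
      h7, h8, h9, h10]
  exact ⟨h0, h1, h2, h3, h4, h5, h6, h7, h8, h9, h10, h11⟩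

structure GrowthBounds (a : ℕ → ℝ) (n : ℕ) : Prop where
  pos : 3 ≤ n → 0 < a n
  lower : 5 ≤ n → 32 / 3 * ((n : ℝ) - 3) * ((n : ℝ) - 2) * a (n - 2) ≤ a n
  upper : 5 ≤ n → a n ≤ 32 / 3 * ((n : ℝ) - 2) * ((n : ℝ) - 1) * a (n - 2)
  ratio : 7 ≤ n → 12 * a (n - 1) ≤ a n
  halfMoment_le : 6 ≤ n → halfMoment a n ≤ 1000 * a (n - 3)
  centeredMoment_le : 6 ≤ n → centeredMoment a n ≤ 120 * (n : ℝ) ^ 2 * a (n - 3)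

section Induction

variable {a : ℕ → ℝ}

theorem growthBounds_of_le_ten (ha : InitialValues a) {n : ℕ} (hn : n ≤ 10) :
    GrowthBounds a n := by
  refine ⟨?_, ?_, ?_, ?_, ?_, ?_⟩ <;> intro hlo <;> interval_cases n <;>
    norm_num [halfMoment, centeredMoment, sum_range_succ, ha.three, ha.four, ha.five, ha.six,
      ha.seven, ha.eight, ha.nine, ha.ten]


theorem GrowthBounds.nonneg (ha : InitialValues a) {k : ℕ} (H : GrowthBounds a k) (hk : 1 ≤ k) :
    0 ≤ a k := by
  rcases (by omega : k = 1 ∨ k = 2 ∨ 3 ≤ k) with rfl | rfl | hk3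
  · rw [ha.one]; norm_num
  · rw [ha.two]
  · exact (H.pos hk3).le

theorem halfMoment_le_of_lt (ha : InitialValues a) {p : ℕ}
    (ih : ∀ k < p + 11, GrowthBounds a k) : halfMoment a (p + 11) ≤ 1000 * a (p + 8) := by
  rcases le_or_gt p 3 with hp | hp
  · interval_cases p <;>
      norm_num [halfMoment, sum_range_succ, ha.three, ha.four, ha.five, ha.six, ha.seven, ha.eight,
        ha.nine, ha.ten, ha.eleven]
  · have hlower := (ih (p + 8) (by omega)).lower (by omega)
    push_cast at hlower
    exact halfMoment_le_of_prev ha.three ha.four (n := p + 11) (by omega)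
      (fun u hu _ => (ih u (by omega)).upper hu) (fun k hk _ => (ih k (by omega)).pos hk)
      ((ih (p + 9) (by omega)).halfMoment_le (by omega)) (by push_cast; linarith)
      ((ih (p + 8) (by omega)).ratio (by omega))

theorem centeredMoment_le_of_lt (ha : InitialValues a) {p : ℕ}
    (ih : ∀ k < p + 11, GrowthBounds a k) :
    centeredMoment a (p + 11) ≤ 120 * ((p + 11 : ℕ) : ℝ) ^ 2 * a (p + 8) := by
  rcases le_or_gt p 2 with hp | hp
  · interval_cases p <;>
      norm_num [centeredMoment, sum_range_succ, ha.three, ha.four, ha.five, ha.six, ha.seven,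
        ha.eight, ha.nine, ha.ten, ha.eleven]
  · have hlower := (ih (p + 8) (by omega)).lower (by omega)
    have hprev := (ih (p + 9) (by omega)).centeredMoment_le (by omega)
    push_cast at hlower hprev
    exact centeredMoment_le_of_prev ha.three ha.four (n := p + 11) (by omega)
      (fun u hu _ => (ih u (by omega)).upper hu) (fun k hk _ => (ih k (by omega)).pos hk)
      (by push_cast; linarith) (by push_cast; linarith) ((ih (p + 8) (by omega)).ratio (by omega))

theorem convSum_le_of_le (ha : InitialValues a) {m : ℕ} (hm : 2 ≤ m)
    (ih : ∀ k ≤ m, GrowthBounds a k) : convSum a m ≤ 46 / 5 * a (m - 1) := by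
  rcases le_or_gt m 8 with hm8 | hm8
  · interval_cases m <;>
      norm_num [convSum, sum_range_succ, ha.one, ha.two, ha.three, ha.four, ha.five, ha.six,
        ha.seven]
  · have hmid := midConvSum_le ha.three (m := m) (by omega)
      (fun k hk _ => (ih k (by omega)).pos hk) ((ih m le_rfl).halfMoment_le (by omega))
    have hratio₁ := (ih (m - 2) (by omega)).ratio (by omega)
    have hratio₂ := (ih (m - 1) (by omega)).ratio (by omega)
    rw [show m - 2 - 1 = m - 3 by omega] at hratio₁
    rw [show m - 1 - 1 = m - 2 by omega] at hratio₂
    exact convSum_le_of_ratio ha.one ha.two (by omega) hmid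
      ((ih (m - 3) (by omega)).pos (by omega)) hratio₁ hratio₂

theorem tripleConvSum_le_of_lt (ha : InitialValues a) {n : ℕ} (hn : 3 ≤ n)
    (ih : ∀ k < n, GrowthBounds a k) : tripleConvSum a n ≤ 2116 / 25 * a (n - 2) :=
  (tripleConvSum_le hn (by norm_num : (0 : ℝ) ≤ 46 / 5)
    (fun m hm _ => convSum_le_of_le ha hm fun k hk => ih k (by omega))
    (fun k hk _ => (ih k (by omega)).nonneg ha hk)).trans_eq (by norm_num)

theorem lower_of_lt (ha : InitialValues a) {p : ℕ} (hrec : a (p + 11) = recurrenceRHS a (p + 11))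
    (ih : ∀ k < p + 11, GrowthBounds a k) :
    32 / 3 * ((p : ℝ) + 8) * ((p : ℝ) + 9) * a (p + 9) ≤ a (p + 11) := by
  have hstar := hrec.trans (recurrenceRHS_eq ha.zero ha.one ha.two (n := p + 11) (by omega))
  have hT := tripleConvSum_le_of_lt ha (by omega) ih
  have hG := midConvSum_nonneg (a := a) (m := p + 11)
    fun k hk _ => ((ih k (by omega)).pos hk).le
  have hV := (ih (p + 9) (by omega)).centeredMoment_le (by omega)
  have hlower₁ := (ih (p + 10) (by omega)).lower (by omega)
  have hlower₂ := (ih (p + 9) (by omega)).lower (by omega)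
  have hratio := (ih (p + 7) (by omega)).ratio (by omega)
  have h7 := (ih (p + 7) (by omega)).pos (by omega)
  have h8 := (ih (p + 8) (by omega)).pos (by omega)
  have h9 := (ih (p + 9) (by omega)).pos (by omega)
  push_cast at hstar hT hV hlower₁ hlower₂ hratio
  have hp : (0 : ℝ) ≤ p := Nat.cast_nonneg p
  have hV' : 16 / 3 * centeredMoment a (p + 9) ≤ 10 * a (p + 9) := by
    nlinarith [mul_le_mul_of_nonneg_left hratio
        (by positivity : (0 : ℝ) ≤ 160 / 3 * ((p : ℝ) + 9) ^ 2),
      mul_nonneg (by nlinarith : (0 : ℝ) ≤ 2 * ((p : ℝ) + 6) * ((p : ℝ) + 7) - ((p : ℝ) + 9) ^ 2)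
        h7.le]
  linarith [mul_nonneg hp h8.le, mul_nonneg hp h9.le]

theorem upper_of_lt (ha : InitialValues a) {p : ℕ} (hrec : a (p + 11) = recurrenceRHS a (p + 11))
    (ih : ∀ k < p + 11, GrowthBounds a k) :
    a (p + 11) ≤ 32 / 3 * ((p : ℝ) + 9) * ((p : ℝ) + 10) * a (p + 9) := by
  have hstar := hrec.trans (recurrenceRHS_eq ha.zero ha.one ha.two (n := p + 11) (by omega))
  have hT := tripleConvSum_nonneg (a := a) (n := p + 11)
    fun k hk _ => (ih k (by omega)).nonneg ha hk
  have hV := centeredMoment_nonneg (a := a) (m := p + 9)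
    fun k hk _ => ((ih k (by omega)).pos hk).le
  have hG := midConvSum_le ha.three (m := p + 11) (by omega)
    (fun k hk _ => (ih k (by omega)).pos hk) (halfMoment_le_of_lt ha ih)
  have hupper := (ih (p + 10) (by omega)).upper (by omega)
  have hratio := (ih (p + 9) (by omega)).ratio (by omega)
  have h8 := (ih (p + 8) (by omega)).pos (by omega)
  have h9 := (ih (p + 9) (by omega)).pos (by omega)
  push_cast at hstar hG hupper hratio
  have hp : (0 : ℝ) ≤ p := Nat.cast_nonneg p
  linarith [mul_le_mul_of_nonneg_left hratio hp, mul_nonneg hp h8.le]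

theorem growthBounds_step (ha : InitialValues a) {p : ℕ}
    (hrec : a (p + 11) = recurrenceRHS a (p + 11)) (ih : ∀ k < p + 11, GrowthBounds a k) :
    GrowthBounds a (p + 11) := by
  have hlower := lower_of_lt ha hrec ih
  have hupper := upper_of_lt ha hrec ih
  have hupper₁ := (ih (p + 10) (by omega)).upper (by omega)
  have hratio := (ih (p + 9) (by omega)).ratio (by omega)
  have h8 := (ih (p + 8) (by omega)).pos (by omega)
  have h9 := (ih (p + 9) (by omega)).pos (by omega)
  push_cast at hupper₁ hratio
  have hcoeff : (0 : ℝ) ≤ 32 / 3 * ((p : ℝ) + 8) * ((p : ℝ) + 9) := by positivity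
  refine ⟨fun _ => ?_, fun _ => ?_, fun _ => ?_, fun _ => ?_, fun _ => halfMoment_le_of_lt ha ih,
    fun _ => centeredMoment_le_of_lt ha ih⟩
  · nlinarith
  · push_cast; linarith
  · push_cast; linarith
  · push_cast
    linarith [mul_le_mul_of_nonneg_left hratio hcoeff]

theorem growthBounds (ha : InitialValues a) (hrec : ∀ n, 6 ≤ n → a n = recurrenceRHS a n)
    (n : ℕ) : GrowthBounds a n := by
  induction n using Nat.strong_induction_on with
  | _ n ih =>
    rcases le_or_gt n 10 with hn | hn
    · exact growthBounds_of_le_ten ha hn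
    · obtain ⟨p, rfl⟩ : ∃ p, n = p + 11 := ⟨n - 11, by omega⟩
      exact growthBounds_step ha (hrec _ (by omega)) ih

end Induction

end PainleveIII

theorem stmt_7 (a : ℕ → ℝ)
    (h0 : a 0 = -1) (h1 : a 1 = 4) (h2 : a 2 = 0)
    (h3 : a 3 = 64 / 3) (h4 : a 4 = 256 / 3) (h5 : a 5 = 2048)
    (hrec : ∀ n : ℕ, 6 ≤ n →
      a n = -(1 / 3) * ∑ k ∈ Finset.Icc 1 (n - 1),
              a k * ∑ j ∈ Finset.range (n - k + 1), a j * a (n - k - j)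
          + (1 / 3) * ∑ k ∈ Finset.Icc 1 (n - 1), a k * a (n - k)
          - 4 * a (n - 1)
          - (32 / 3) * ∑ k ∈ Finset.Icc 1 (n - 2),
              (2 * (k : ℝ) ^ 2 + (k : ℝ) * (2 - (n : ℝ))) * a k * a (n - 2 - k)) :
    ∀ n : ℕ, 5 ≤ n → a n ≥ (32 / 3) * ((n : ℝ) - 3) * ((n : ℝ) - 2) * a (n - 2) := by
  have hrec' : ∀ n, 6 ≤ n → a n = PainleveIII.recurrenceRHS a n := hrec
  have ha := PainleveIII.initialValues_of_recurrence h0 h1 h2 h3 h4 h5 hrec'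
  exact fun n hn => (PainleveIII.growthBounds ha hrec' n).lower hn
end

section
/- Let a_n be given by the general Painlevé III recurrence: a_0 a nonzero cube root of -δ/α, a_1 = -β/(2α a_0), a_2 = 0, a_3 = -(β/(6α²a_0²))(β²/(4δ)+1), and for n ≥ 4, a_n = (1/(3α a_0²))·(-α∑_{k=1}^{n-1} a_k ∑_{j=0}^{n-k} a_j a_{n-k-j} - α a_0 ∑_{k=1}^{n-1} a_k a_{n-k} - (3/2)β a_{n-1} + ∑_{k=1}^{n-2}(2k² + k(2-n)) a_k a_{n-2-k}). If ã_n denotes the coefficients obtained with the branch choice ã_0 = ω·a_0 where ω³ = 1, then ã_n = ω^{n+1}·a_n for all n ≥ 0. -/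
/-!
Each term of the Painlevé III recurrence for `a n` is weighted-homogeneous: replacing every `a j`
by `ω ^ (j + 1) * a j` multiplies the bracket by `ω ^ n` up to factors `ω ^ 3 = 1`, while the
prefactor `1 / (3 α a₀²)` picks up `ω⁻² = ω`. So the recurrence step, like the four initial
values, is compatible with the twist, and strong induction gives `b n = ω ^ (n + 1) * a n`.
-/

open Finset

section PainleveThree

variable {K : Type*} [Field K]

theorem inv_eq_sq_of_pow_three_eq_one {ω : K} (hω : ω ^ 3 = 1) : ω⁻¹ = ω ^ 2 :=
  inv_eq_of_mul_eq_one_right (by rw [← pow_succ']; exact hω)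

theorem inv_mul_mul_eq_of_pow_three_eq_one {ω : K} (hω : ω ^ 3 = 1) (c x : K) :
    (c * (ω * x))⁻¹ = ω ^ 2 * (c * x)⁻¹ := by
  rw [mul_left_comm, mul_inv, inv_eq_sq_of_pow_three_eq_one hω]

theorem inv_mul_mul_sq_eq_of_pow_three_eq_one {ω : K} (hω : ω ^ 3 = 1) (c x : K) :
    (c * (ω * x) ^ 2)⁻¹ = ω * (c * x ^ 2)⁻¹ := by
  simp only [mul_inv, mul_pow, ← inv_pow, inv_eq_sq_of_pow_three_eq_one hω]
  linear_combination c⁻¹ * (x⁻¹) ^ 2 * ω * hω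

def painleveThreeRec (α β : K) (a : ℕ → K) (n : ℕ) : K :=
  (1 / (3 * α * (a 0) ^ 2)) *
    (-α * ∑ k ∈ Icc 1 (n - 1), a k * ∑ j ∈ range (n - k + 1), a j * a (n - k - j)
     - α * a 0 * ∑ k ∈ Icc 1 (n - 1), a k * a (n - k)
     - (3 / 2) * β * a (n - 1)
     + ∑ k ∈ Icc 1 (n - 2), (2 * (k : K) ^ 2 + (k : K) * (2 - (n : K))) * a k * a (n - 2 - k))

variable {a b : ℕ → K} {ω : K}

theorem sum_mul_twist {s : Finset ℕ} {m : ℕ} (f : ℕ → K) (hle : ∀ k ∈ s, k ≤ m)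
    (hb : ∀ k ∈ s, b k = ω ^ (k + 1) * a k)
    (hb' : ∀ k ∈ s, b (m - k) = ω ^ (m - k + 1) * a (m - k)) :
    ∑ k ∈ s, f k * b k * b (m - k) = ω ^ (m + 2) * ∑ k ∈ s, f k * a k * a (m - k) := by
  rw [mul_sum]
  refine sum_congr rfl fun k hk => ?_
  have hexp : ω ^ (m + 2) = ω ^ (k + 1) * ω ^ (m - k + 1) := by
    rw [← pow_add]; congr 1; have := hle k hk; omega
  rw [hb k hk, hb' k hk, hexp]
  ring

theorem sum_twist {s : Finset ℕ} {m : ℕ} (hle : ∀ k ∈ s, k ≤ m)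
    (hb : ∀ k ∈ s, b k = ω ^ (k + 1) * a k)
    (hb' : ∀ k ∈ s, b (m - k) = ω ^ (m - k + 1) * a (m - k)) :
    ∑ k ∈ s, b k * b (m - k) = ω ^ (m + 2) * ∑ k ∈ s, a k * a (m - k) := by
  simpa only [one_mul] using sum_mul_twist (fun _ => 1) hle hb hb'

theorem sum_cubic_twist {n : ℕ} (hb : ∀ j < n, b j = ω ^ (j + 1) * a j) :
    ∑ k ∈ Icc 1 (n - 1), b k * ∑ j ∈ range (n - k + 1), b j * b (n - k - j)
      = ω ^ (n + 3) *
        ∑ k ∈ Icc 1 (n - 1), a k * ∑ j ∈ range (n - k + 1), a j * a (n - k - j) := by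
  rw [mul_sum]
  refine sum_congr rfl fun k hk => ?_
  obtain ⟨hk1, hkn⟩ := mem_Icc.mp hk
  have hinner : ∑ j ∈ range (n - k + 1), b j * b (n - k - j)
      = ω ^ (n - k + 2) * ∑ j ∈ range (n - k + 1), a j * a (n - k - j) :=
    sum_twist (fun j hj => by rw [mem_range] at hj; omega)
      (fun j hj => hb j (by rw [mem_range] at hj; omega)) (fun j _ => hb _ (by omega))
  have hexp : ω ^ (n + 3) = ω ^ (k + 1) * ω ^ (n - k + 2) := by
    rw [← pow_add]; congr 1; omega
  rw [hinner, hb k (by omega), hexp]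
  ring

theorem painleveThreeRec_twist (α β : K) (hω : ω ^ 3 = 1) {n : ℕ} (hn : 2 ≤ n)
    (hb : ∀ j < n, b j = ω ^ (j + 1) * a j) :
    painleveThreeRec α β b n = ω ^ (n + 1) * painleveThreeRec α β a n := by
  have hquad := sum_twist (s := Icc 1 (n - 1)) (m := n)
    (fun k hk => by rw [mem_Icc] at hk; omega) (fun k hk => hb k (by rw [mem_Icc] at hk; omega))
    (fun k hk => hb _ (by rw [mem_Icc] at hk; omega))
  have hweighted := sum_mul_twist (s := Icc 1 (n - 2)) (m := n - 2)
    (fun k => 2 * (k : K) ^ 2 + (k : K) * (2 - (n : K)))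
    (fun k hk => by rw [mem_Icc] at hk; omega) (fun k hk => hb k (by rw [mem_Icc] at hk; omega))
    (fun k hk => hb _ (by rw [mem_Icc] at hk; omega))
  have hpre : 1 / (3 * α * (b 0) ^ 2) = ω * (1 / (3 * α * (a 0) ^ 2)) := by
    rw [hb 0 (by omega), pow_one, one_div, one_div, inv_mul_mul_sq_eq_of_pow_three_eq_one hω]
  have hexp : n - 2 + 2 = n := by omega
  unfold painleveThreeRec
  rw [hpre, sum_cubic_twist hb, hquad, hweighted, hexp, hb (n - 1) (by omega), hb 0 (by omega),
    Nat.sub_add_cancel (by omega : 1 ≤ n)]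
  linear_combination (1 / (3 * α * a 0 ^ 2)) * ω ^ (n + 1) *
    (-α * ∑ k ∈ Icc 1 (n - 1), a k * ∑ j ∈ range (n - k + 1), a j * a (n - k - j)
      - α * a 0 * ∑ k ∈ Icc 1 (n - 1), a k * a (n - k)) * hω

end PainleveThree

theorem stmt_13_general (α β δ : ℂ) (a b : ℕ → ℂ) (ω : ℂ) (hω : ω ^ 3 = 1)
    (ha1 : a 1 = -β / (2 * α * a 0)) (ha2 : a 2 = 0)
    (ha3 : a 3 = -(β / (6 * α ^ 2 * (a 0) ^ 2)) * (β ^ 2 / (4 * δ) + 1))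
    (harec : ∀ n : ℕ, 4 ≤ n →
      a n = (1 / (3 * α * (a 0) ^ 2)) *
        (-α * ∑ k ∈ Finset.Icc 1 (n - 1),
            a k * ∑ j ∈ Finset.range (n - k + 1), a j * a (n - k - j)
         - α * a 0 * ∑ k ∈ Finset.Icc 1 (n - 1), a k * a (n - k)
         - (3 / 2) * β * a (n - 1)
         + ∑ k ∈ Finset.Icc 1 (n - 2),
            (2 * (k : ℂ) ^ 2 + (k : ℂ) * (2 - (n : ℂ))) * a k * a (n - 2 - k)))
    (hb0 : b 0 = ω * a 0)
    (hb1 : b 1 = -β / (2 * α * b 0)) (hb2 : b 2 = 0)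
    (hb3 : b 3 = -(β / (6 * α ^ 2 * (b 0) ^ 2)) * (β ^ 2 / (4 * δ) + 1))
    (hbrec : ∀ n : ℕ, 4 ≤ n →
      b n = (1 / (3 * α * (b 0) ^ 2)) *
        (-α * ∑ k ∈ Finset.Icc 1 (n - 1),
            b k * ∑ j ∈ Finset.range (n - k + 1), b j * b (n - k - j)
         - α * b 0 * ∑ k ∈ Finset.Icc 1 (n - 1), b k * b (n - k)
         - (3 / 2) * β * b (n - 1)
         + ∑ k ∈ Finset.Icc 1 (n - 2),
            (2 * (k : ℂ) ^ 2 + (k : ℂ) * (2 - (n : ℂ))) * b k * b (n - 2 - k))) :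
    ∀ n : ℕ, b n = ω ^ (n + 1) * a n := by
  intro n
  induction n using Nat.strong_induction_on with
  | _ n ih =>
    match n with
    | 0 => simpa using hb0
    | 1 =>
      rw [hb1, ha1, hb0, div_eq_mul_inv, div_eq_mul_inv, inv_mul_mul_eq_of_pow_three_eq_one hω]
      ring
    | 2 => simp [hb2, ha2]
    | 3 =>
      rw [hb3, ha3, hb0, div_eq_mul_inv, div_eq_mul_inv, inv_mul_mul_sq_eq_of_pow_three_eq_one hω]
      linear_combination (β * (6 * α ^ 2 * a 0 ^ 2)⁻¹ * (β ^ 2 / (4 * δ) + 1)) * ω * hω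
    | n + 4 =>
      calc b (n + 4) = painleveThreeRec α β b (n + 4) := hbrec _ (by omega)
        _ = ω ^ (n + 4 + 1) * painleveThreeRec α β a (n + 4) :=
          painleveThreeRec_twist α β hω (by omega) ih
        _ = ω ^ (n + 4 + 1) * a (n + 4) := congrArg _ (harec _ (by omega)).symm

theorem stmt_13 (α β δ : ℂ) (hαδ : α * δ ≠ 0) (a b : ℕ → ℂ) (ω : ℂ) (hω : ω ^ 3 = 1)
    (ha0 : (a 0) ^ 3 = -δ / α) (ha0ne : a 0 ≠ 0)
    (ha1 : a 1 = -β / (2 * α * a 0)) (ha2 : a 2 = 0)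
    (ha3 : a 3 = -(β / (6 * α ^ 2 * (a 0) ^ 2)) * (β ^ 2 / (4 * δ) + 1))
    (harec : ∀ n : ℕ, 4 ≤ n →
      a n = (1 / (3 * α * (a 0) ^ 2)) *
        (-α * ∑ k ∈ Finset.Icc 1 (n - 1),
            a k * ∑ j ∈ Finset.range (n - k + 1), a j * a (n - k - j)
         - α * a 0 * ∑ k ∈ Finset.Icc 1 (n - 1), a k * a (n - k)
         - (3 / 2) * β * a (n - 1)
         + ∑ k ∈ Finset.Icc 1 (n - 2),
            (2 * (k : ℂ) ^ 2 + (k : ℂ) * (2 - (n : ℂ))) * a k * a (n - 2 - k)))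
    (hb0 : b 0 = ω * a 0)
    (hb1 : b 1 = -β / (2 * α * b 0)) (hb2 : b 2 = 0)
    (hb3 : b 3 = -(β / (6 * α ^ 2 * (b 0) ^ 2)) * (β ^ 2 / (4 * δ) + 1))
    (hbrec : ∀ n : ℕ, 4 ≤ n →
      b n = (1 / (3 * α * (b 0) ^ 2)) *
        (-α * ∑ k ∈ Finset.Icc 1 (n - 1),
            b k * ∑ j ∈ Finset.range (n - k + 1), b j * b (n - k - j)
         - α * b 0 * ∑ k ∈ Finset.Icc 1 (n - 1), b k * b (n - k)
         - (3 / 2) * β * b (n - 1)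
         + ∑ k ∈ Finset.Icc 1 (n - 2),
            (2 * (k : ℂ) ^ 2 + (k : ℂ) * (2 - (n : ℂ))) * b k * b (n - 2 - k))) :
    ∀ n : ℕ, b n = ω ^ (n + 1) * a n :=
  stmt_13_general α β δ a b ω hω ha1 ha2 ha3 harec hb0 hb1 hb2 hb3 hbrec
end

section
/- Let b_n = a_n/n! where a_n satisfy 4·(32/3)^{n/2-1}·(n-2)! ≤ a_n ≤ (32/3)^{n/2-1}·n! for all n ≥ 5. Then limsup_{n→∞} |b_n|^{1/n} = √(32/3); consequently the power series ∑ b_n t^n has radius of convergence √(3/32). -/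
/-!
Write `b n = a n / n!` and `u n = c ^ (n/2 - 1)` with `c = 32/3`. Since `n! ≤ n² (n-2)!`, the
hypotheses squeeze `b n` between `u n / n²` and `u n`. Both bounds have `n`-th roots tending
to `√c`, because `(n²)^(1/n) → 1`, so `|b n|^(1/n)` converges to `√c`; in particular this is its
limsup. The root test (in both directions) then gives the radius of convergence `1/√c = √(3/32)`.
-/

open Filter Topology
open scoped Nat

theorem Nat.factorial_le_pow_mul_factorial_sub {n k : ℕ} (hk : k ≤ n) :
    n ! ≤ n ^ k * (n - k)! := by
  rw [← Nat.factorial_mul_descFactorial hk, mul_comm]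
  exact Nat.mul_le_mul_right _ (Nat.descFactorial_le_pow n k)

section RootTest

variable {b : ℕ → ℝ} {L : ℝ}

theorem abs_mul_pow_eq_root_mul_abs_pow (x t : ℝ) {n : ℕ} (hn : n ≠ 0) :
    |x * t ^ n| = (|x| ^ (n : ℝ)⁻¹ * |t|) ^ n := by
  rw [mul_pow, ← Real.rpow_natCast (|x| ^ (n : ℝ)⁻¹), ← Real.rpow_mul (abs_nonneg x),
    inv_mul_cancel₀ (Nat.cast_ne_zero.mpr hn), Real.rpow_one, abs_mul, abs_pow]

theorem summable_mul_pow_of_tendsto_root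
    (h : Tendsto (fun n ↦ |b n| ^ (n : ℝ)⁻¹) atTop (𝓝 L)) {t : ℝ} (ht : L * |t| < 1) :
    Summable fun n ↦ b n * t ^ n := by
  have hL : 0 ≤ L := ge_of_tendsto' h fun n ↦ by positivity
  obtain ⟨r, hLr, hr1⟩ := exists_between ht
  have hr : 0 ≤ r := (by positivity : 0 ≤ L * |t|).trans hLr.le
  refine Summable.of_norm_bounded_eventually_nat (summable_geometric_of_lt_one hr hr1) ?_
  filter_upwards [(h.mul_const |t|).eventually_lt_const hLr, eventually_ne_atTop 0]
    with n hroot hn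
  rw [Real.norm_eq_abs, abs_mul_pow_eq_root_mul_abs_pow _ _ hn]
  exact pow_le_pow_left₀ (by positivity) hroot.le n

theorem not_summable_mul_pow_of_tendsto_root
    (h : Tendsto (fun n ↦ |b n| ^ (n : ℝ)⁻¹) atTop (𝓝 L)) {t : ℝ} (ht : 1 < L * |t|) :
    ¬Summable fun n ↦ b n * t ^ n := by
  intro hsum
  have hsmall : ∀ᶠ n in atTop, |b n * t ^ n| < 1 := by
    have := hsum.tendsto_atTop_zero.abs
    rw [abs_zero] at this
    exact this.eventually_lt_const one_pos
  obtain ⟨n, ⟨hroot, hterm⟩, hn⟩ :=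
    (((h.mul_const |t|).eventually_const_lt ht).and hsmall |>.and (eventually_ne_atTop 0)).exists
  rw [abs_mul_pow_eq_root_mul_abs_pow _ _ hn] at hterm
  exact hterm.not_ge (one_le_pow₀ hroot.le)

end RootTest

theorem tendsto_root_natCast_sq :
    Tendsto (fun n : ℕ ↦ ((n : ℝ) ^ 2) ^ (n : ℝ)⁻¹) atTop (𝓝 1) := by
  have hroot : Tendsto (fun n : ℕ ↦ (n : ℝ) ^ (n : ℝ)⁻¹) atTop (𝓝 1) := by
    simpa [Function.comp_def, one_div] using
      tendsto_rpow_div.comp (tendsto_natCast_atTop_atTop (R := ℝ))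
  have hsq : ∀ n : ℕ, ((n : ℝ) ^ 2) ^ (n : ℝ)⁻¹ = ((n : ℝ) ^ (n : ℝ)⁻¹) ^ 2 := fun n ↦ by
    rw [← Real.rpow_natCast, ← Real.rpow_natCast, ← Real.rpow_mul n.cast_nonneg,
      ← Real.rpow_mul n.cast_nonneg, mul_comm]
  simpa [hsq] using hroot.pow 2

theorem Filter.Tendsto.root_div_natCast_sq {u : ℕ → ℝ} {L : ℝ} (hu0 : ∀ n, 0 ≤ u n)
    (hu : Tendsto (fun n ↦ u n ^ (n : ℝ)⁻¹) atTop (𝓝 L)) :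
    Tendsto (fun n ↦ (u n / (n : ℝ) ^ 2) ^ (n : ℝ)⁻¹) atTop (𝓝 L) := by
  have hsplit : ∀ n : ℕ, (u n / (n : ℝ) ^ 2) ^ (n : ℝ)⁻¹
      = u n ^ (n : ℝ)⁻¹ / ((n : ℝ) ^ 2) ^ (n : ℝ)⁻¹ := fun n ↦
    Real.div_rpow (hu0 n) (by positivity) _
  rw [funext hsplit, ← div_one L]
  exact hu.div tendsto_root_natCast_sq one_ne_zero

theorem tendsto_root_rpow_half_sub_one {c : ℝ} (hc : 0 ≤ c) :
    Tendsto (fun n : ℕ ↦ (c ^ ((n : ℝ) / 2 - 1)) ^ (n : ℝ)⁻¹) atTop (𝓝 (√c)) := by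
  have hexp : Tendsto (fun n : ℕ ↦ (1 : ℝ) / 2 - (n : ℝ)⁻¹) atTop (𝓝 (1 / 2)) := by
    simpa using
      tendsto_const_nhds.sub (tendsto_inv_atTop_zero.comp (tendsto_natCast_atTop_atTop (R := ℝ)))
  rw [Real.sqrt_eq_rpow]
  refine (tendsto_const_nhds.rpow hexp (Or.inr one_half_pos)).congr' ?_
  filter_upwards [eventually_ne_atTop 0] with n hn
  rw [← Real.rpow_mul hc]
  field_simp

theorem tendsto_root_abs_of_le_of_le {b ℓ u : ℕ → ℝ} {L : ℝ}
    (hℓ : Tendsto (fun n ↦ ℓ n ^ (n : ℝ)⁻¹) atTop (𝓝 L))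
    (hu : Tendsto (fun n ↦ u n ^ (n : ℝ)⁻¹) atTop (𝓝 L))
    (hle : ∀ᶠ n in atTop, 0 ≤ ℓ n ∧ ℓ n ≤ b n ∧ b n ≤ u n) :
    Tendsto (fun n ↦ |b n| ^ (n : ℝ)⁻¹) atTop (𝓝 L) := by
  refine tendsto_of_tendsto_of_tendsto_of_le_of_le' hℓ hu ?_ ?_
  all_goals
    filter_upwards [hle] with n ⟨hℓ0, hℓb, hbu⟩
    rw [abs_of_nonneg (hℓ0.trans hℓb)]
  · exact Real.rpow_le_rpow hℓ0 hℓb (by positivity)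
  · exact Real.rpow_le_rpow (hℓ0.trans hℓb) hbu (by positivity)

theorem tendsto_root_abs_div_factorial {a u : ℕ → ℝ} {L : ℝ} (hu0 : ∀ n, 0 ≤ u n)
    (hu : Tendsto (fun n ↦ u n ^ (n : ℝ)⁻¹) atTop (𝓝 L))
    (hlower : ∀ᶠ n in atTop, u n * (n - 2)! ≤ a n) (hupper : ∀ᶠ n in atTop, a n ≤ u n * n !) :
    Tendsto (fun n ↦ |a n / n !| ^ (n : ℝ)⁻¹) atTop (𝓝 L) := by
  refine tendsto_root_abs_of_le_of_le (hu.root_div_natCast_sq hu0) hu ?_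
  filter_upwards [hlower, hupper, eventually_ge_atTop 2] with n hlow hup hn
  have hfact : (n ! : ℝ) ≤ (n : ℝ) ^ 2 * (n - 2)! := by
    exact_mod_cast Nat.factorial_le_pow_mul_factorial_sub hn
  refine ⟨div_nonneg (hu0 n) (sq_nonneg _), ?_, (div_le_iff₀ (by positivity)).mpr hup⟩
  rw [div_le_div_iff₀ (by positivity) (by positivity)]
  calc u n * n ! ≤ u n * (n - 2)! * (n : ℝ) ^ 2 := by nlinarith [hu0 n]
    _ ≤ a n * (n : ℝ) ^ 2 := by gcongr

theorem stmt_15 (a : ℕ → ℝ)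
    (hbound : ∀ n : ℕ, 5 ≤ n →
      4 * (32 / 3 : ℝ) ^ ((n : ℝ) / 2 - 1) * (Nat.factorial (n - 2) : ℝ) ≤ a n ∧
      a n ≤ (32 / 3 : ℝ) ^ ((n : ℝ) / 2 - 1) * (Nat.factorial n : ℝ)) :
    Filter.limsup (fun n : ℕ => |a n / (Nat.factorial n : ℝ)| ^ ((n : ℝ)⁻¹)) Filter.atTop
        = Real.sqrt (32 / 3) ∧
    (∀ t : ℝ, |t| < Real.sqrt (3 / 32) →
      Summable (fun n : ℕ => a n / (Nat.factorial n : ℝ) * t ^ n)) ∧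
    (∀ t : ℝ, Real.sqrt (3 / 32) < |t| →
      ¬ Summable (fun n : ℕ => a n / (Nat.factorial n : ℝ) * t ^ n)) := by
  have hroot : Tendsto (fun n ↦ |a n / n !| ^ (n : ℝ)⁻¹) atTop (𝓝 √(32 / 3)) := by
    refine tendsto_root_abs_div_factorial (fun n ↦ by positivity)
      (tendsto_root_rpow_half_sub_one (by norm_num)) ?_ ?_
    all_goals filter_upwards [eventually_ge_atTop 5] with n hn
    · have : 0 ≤ (32 / 3 : ℝ) ^ ((n : ℝ) / 2 - 1) * (n - 2)! := by positivity
      linarith [(hbound n hn).1]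
    · exact (hbound n hn).2
  have hpos : 0 < √(32 / 3 : ℝ) := by positivity
  have hradius : √(3 / 32 : ℝ) = 1 / √(32 / 3) := by
    rw [one_div, ← Real.sqrt_inv]
    norm_num
  refine ⟨hroot.limsup_eq, fun t ht ↦ ?_, fun t ht ↦ ?_⟩
  · rw [hradius, lt_div_iff₀' hpos] at ht
    exact summable_mul_pow_of_tendsto_root hroot ht
  · rw [hradius, div_lt_iff₀' hpos] at ht
    exact not_summable_mul_pow_of_tendsto_root hroot ht
end
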